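/- Let Q = (0,1)^d, r ∈ (0,1), and f(x) = x₁^{−1} χ_Q(x). Then f ∈ L^r(ℝ^d) (in particular f lies in the Wiener amalgam space W^r(ω,𝓑) for any moderate weight ω and invariant QBF space 𝓑), but f ∉ L¹_loc(ℝ^d); hence f does not define a distribution, so W^r(ω,𝓑) is not contained in the space of (tempered, or Gelfand–Shilov) distributions when r < 1. -/

import Mathlib

/-!
On the unit cube, Lebesgue measure is the product of the uniform probability measures on
`(0, 1)`, so a function of the first coordinate alone is integrable on the cube iff it is
integrable on `(0, 1)`. Thus `|f|^r` reduces to `t^{-r}`, integrable on `(0, 1)` since `r < 1`,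
while integrability of `f` on the closed cube reduces to that of `t⁻¹`, which fails.
-/

noncomputable section
open MeasureTheory
open scoped ENNReal

/-- The function `f(x) = x₁^{−1} χ_{(0,1)^d}(x)` on ℝ^d. -/
def badFun (d : ℕ) (hd : 0 < d) : (Fin d → ℝ) → ℝ :=
  Set.indicator {x : Fin d → ℝ | ∀ i, 0 < x i ∧ x i < 1} fun x => (x ⟨0, hd⟩)⁻¹

open Set

theorem integrableOn_unitCube_comp_eval_iff {ι E : Type*} [Fintype ι] [NormedAddCommGroup E]
    (i : ι) {g : ℝ → E} (hg : AEStronglyMeasurable g (volume.restrict (Ioo 0 1))) :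
    IntegrableOn (fun x : ι → ℝ => g (x i)) (univ.pi fun _ => Ioo 0 1) ↔
      IntegrableOn g (Ioo 0 1) := by
  have : IsProbabilityMeasure (volume.restrict (Ioo (0 : ℝ) 1)) := ⟨by simp [Real.volume_Ioo]⟩
  rw [IntegrableOn, volume_pi, Measure.restrict_pi_pi]
  exact (measurePreserving_eval _ i).integrable_comp hg

lemma not_integrableOn_Ioo_zero_one_inv : ¬ IntegrableOn (fun t : ℝ => t⁻¹) (Ioo 0 1) := by
  rw [← intervalIntegrable_iff_integrableOn_Ioo_of_le zero_le_one]
  simp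

lemma badFun_eq_indicator (d : ℕ) (hd : 0 < d) :
    badFun d hd = (univ.pi fun _ => Ioo 0 1).indicator fun x => (x ⟨0, hd⟩)⁻¹ := by
  rw [badFun]
  congr
  ext x
  simp

lemma norm_badFun_rpow (d : ℕ) (hd : 0 < d) {r : ℝ} (hr : 0 < r) :
    (fun x => ‖badFun d hd x‖ ^ r) =
      (univ.pi fun _ => Ioo 0 1).indicator fun x => x ⟨0, hd⟩ ^ (-r) := by
  ext x
  rw [badFun_eq_indicator]
  by_cases hx : x ∈ univ.pi fun _ => Ioo (0 : ℝ) 1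
  · have hx₀ : 0 < x ⟨0, hd⟩ := (hx _ (mem_univ _)).1
    rw [indicator_of_mem hx, indicator_of_mem hx, norm_inv, Real.norm_of_nonneg hx₀.le,
      Real.inv_rpow hx₀.le, Real.rpow_neg hx₀.le]
  · rw [indicator_of_notMem hx, indicator_of_notMem hx, norm_zero, Real.zero_rpow hr.ne']

theorem memLp_badFun (d : ℕ) (hd : 0 < d) {r : ℝ} (hr0 : 0 < r) (hr1 : r < 1) :
    MemLp (badFun d hd) (ENNReal.ofReal r) volume := by
  have hp0 : ENNReal.ofReal r ≠ 0 := ENNReal.ofReal_ne_zero_iff.2 hr0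
  have hmeas : Measurable (badFun d hd) := by
    rw [badFun_eq_indicator]
    exact (measurable_pi_apply _).inv.indicator (.univ_pi fun _ => measurableSet_Ioo)
  rw [← memLp_norm_rpow_iff hmeas.aestronglyMeasurable hp0 ENNReal.ofReal_ne_top,
    ENNReal.div_self hp0 ENNReal.ofReal_ne_top, memLp_one_iff_integrable,
    ENNReal.toReal_ofReal hr0.le, norm_badFun_rpow d hd hr0,
    integrable_indicator_iff (.univ_pi fun _ => measurableSet_Ioo),
    integrableOn_unitCube_comp_eval_iff _ (g := fun t => t ^ (-r)) (by fun_prop)]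
  exact (intervalIntegral.integrableOn_Ioo_rpow_iff zero_lt_one).2 (by linarith)

theorem not_locallyIntegrable_badFun (d : ℕ) (hd : 0 < d) :
    ¬ LocallyIntegrable (badFun d hd) volume := by
  intro h
  have hK := h.integrableOn_isCompact
    (isCompact_univ_pi fun _ => isCompact_Icc (a := (0 : ℝ)) (b := 1))
  rw [badFun_eq_indicator, integrableOn_indicator_iff (.univ_pi fun _ => measurableSet_Ioo),
    inter_eq_left.2 (pi_mono fun _ _ => Ioo_subset_Icc_self),
    integrableOn_unitCube_comp_eval_iff _ measurable_inv.aestronglyMeasurable] at hK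
  exact not_integrableOn_Ioo_zero_one_inv hK

/-- for `0 < r < 1`, `f(x) = x₁^{−1} χ_{(0,1)^d}(x)` belongs to
`L^r(ℝ^d)` but is not locally integrable, so it does not define a distribution. -/
theorem stmt17 (d : ℕ) (hd : 0 < d) (r : ℝ) (hr0 : 0 < r) (hr1 : r < 1) :
    MemLp (badFun d hd) (ENNReal.ofReal r) (volume : Measure (Fin d → ℝ)) ∧
    ¬ LocallyIntegrable (badFun d hd) (volume : Measure (Fin d → ℝ)) :=
  ⟨memLp_badFun d hd hr0 hr1, not_locallyIntegrable_badFun d hd⟩
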